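/- Let G be a connected simple graph with maximum degree at most 4 and suppose there is a list assignment L with |L(e)| ≥ 22 for every edge e such that G is not strongly L-edge-colorable but every proper subgraph of G is strongly L-edge-colorable (restricting L to its edges). Then G contains no cycle of length 3. -/

import Mathlib

/-- Two edges are "close" (distance at most 1): some endpoint of one equals,
or is adjacent to, some endpoint of the other. In a strong edge-coloring,
distinct close edges must get distinct colors. -/
def EdgeClose {V : Type*} (G : SimpleGraph V) (e₁ e₂ : Sym2 V) : Prop :=
  ∃ u w, u ∈ e₁ ∧ w ∈ e₂ ∧ (u = w ∨ G.Adj u w)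

/-- `c` is a strong edge-coloring of `G` (viewed as a function on all of `Sym2 V`,
only its values on edges of `G` matter). -/
def IsStrongEdgeColoringOn {V : Type*} (G : SimpleGraph V) (c : Sym2 V → ℕ) : Prop :=
  ∀ e₁ ∈ G.edgeSet, ∀ e₂ ∈ G.edgeSet, e₁ ≠ e₂ → EdgeClose G e₁ e₂ → c e₁ ≠ c e₂

/-- `G` is strongly `L`-edge-colorable. -/
def StronglyLColorable {V : Type*} (G : SimpleGraph V) (L : Sym2 V → Finset ℕ) : Prop :=
  ∃ c : Sym2 V → ℕ, IsStrongEdgeColoringOn G c ∧ ∀ e ∈ G.edgeSet, c e ∈ L e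

/-- `G` is strongly `k`-edge-choosable. -/
def StronglyEdgeChoosable {V : Type*} (G : SimpleGraph V) (k : ℕ) : Prop :=
  ∀ L : Sym2 V → Finset ℕ, (∀ e ∈ G.edgeSet, k ≤ (L e).card) → StronglyLColorable G L

/-!
Let `abc` be a triangle. By minimality, `G` minus the edges at `a` has a strong `L`-edge-colouring,
and it is strong in `G` on all edges avoiding `a`: two such edges close in `G` are close via an
adjacency not involving `a`. Now recolour the edges at `a` greedily, `ab` and `ac` last. Double
counting degrees over `N(a) ∪ N(b)` with maximum degree 4 shows that a triangle edge is close to at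
most 20 edges and any other edge at `a` to at most 23, two of which (`ab`, `ac`) are still
uncoloured. So at most 21 colours are ever forbidden, fewer than the 22 available.
-/

open Finset SimpleGraph

section
variable {V : Type*} {G : SimpleGraph V}

lemma EdgeClose.symm {e₁ e₂ : Sym2 V} (h : EdgeClose G e₁ e₂) : EdgeClose G e₂ e₁ := by
  obtain ⟨u, w, hu, hw, huw⟩ := h
  exact ⟨w, u, hw, hu, huw.imp Eq.symm G.adj_symm⟩

lemma EdgeClose.deleteIncidenceSet {x : V} {e₁ e₂ : Sym2 V} (h : EdgeClose G e₁ e₂)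
    (h₁ : x ∉ e₁) (h₂ : x ∉ e₂) : EdgeClose (G.deleteIncidenceSet x) e₁ e₂ := by
  obtain ⟨u, w, hu, hw, huw⟩ := h
  exact ⟨u, w, hu, hw, huw.imp id fun hadj =>
    deleteIncidenceSet_adj.2 ⟨hadj, ne_of_mem_of_not_mem hu h₁, ne_of_mem_of_not_mem hw h₂⟩⟩

lemma deleteIncidenceSet_lt {a b : V} (hab : G.Adj a b) : G.deleteIncidenceSet a < G :=
  (deleteIncidenceSet_le G a).lt_of_ne fun h => by
    simpa using deleteIncidenceSet_adj.1 (h.symm ▸ hab : (G.deleteIncidenceSet a).Adj a b)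

lemma eq_or_adj_of_mem_incidenceSet {a z : V} {e : Sym2 V} (he : e ∈ G.incidenceSet a)
    (hz : z ∈ e) : z = a ∨ G.Adj a z := by
  obtain ⟨hE, ha⟩ := he
  induction e using Sym2.ind with
  | _ p q =>
    rw [Sym2.mem_iff] at ha hz
    rcases ha with rfl | rfl <;> rcases hz with rfl | rfl <;> simp_all [G.adj_comm]

def IsStrongLColoringOutside (G : SimpleGraph V) (L : Sym2 V → Finset ℕ) (R : Finset (Sym2 V))
    (φ : Sym2 V → ℕ) : Prop :=
  (∀ e ∈ G.edgeSet, e ∉ R → φ e ∈ L e) ∧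
    ∀ e₁ ∈ G.edgeSet, ∀ e₂ ∈ G.edgeSet, e₁ ∉ R → e₂ ∉ R → e₁ ≠ e₂ → EdgeClose G e₁ e₂ →
      φ e₁ ≠ φ e₂

lemma IsStrongLColoringOutside.stronglyLColorable {L : Sym2 V → Finset ℕ} {φ : Sym2 V → ℕ}
    (hφ : IsStrongLColoringOutside G L ∅ φ) :
    StronglyLColorable G L :=
  ⟨φ, fun e₁ h₁ e₂ h₂ => hφ.2 e₁ h₁ e₂ h₂ (notMem_empty _) (notMem_empty _),
    fun e he => hφ.1 e he (notMem_empty _)⟩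

end

section
variable {V : Type*} [Fintype V] [DecidableEq V] (G : SimpleGraph V) [DecidableRel G.Adj]

instance EdgeClose.decidable (e₁ e₂ : Sym2 V) : Decidable (EdgeClose G e₁ e₂) := by
  unfold EdgeClose; infer_instance

def closeEdges (e : Sym2 V) : Finset (Sym2 V) :=
  {e' ∈ G.edgeFinset | e' ≠ e ∧ EdgeClose G e e'}

variable {G}

lemma mem_closeEdges {e e' : Sym2 V} :
    e' ∈ closeEdges G e ↔ e' ∈ G.edgeSet ∧ e' ≠ e ∧ EdgeClose G e e' := by
  simp [closeEdges]

namespace IsStrongLColoringOutside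

variable {L : Sym2 V → Finset ℕ} {R : Finset (Sym2 V)} {φ : Sym2 V → ℕ}

lemma exists_erase (hφ : IsStrongLColoringOutside G L R φ) {e : Sym2 V}
    (hcard : #{e' ∈ closeEdges G e | e' ∉ R} < #(L e)) :
    ∃ ψ, IsStrongLColoringOutside G L (R.erase e) ψ := by
  obtain ⟨k, hkL, hkF⟩ := exists_mem_notMem_of_card_lt_card (card_image_le.trans_lt hcard)
  have hk : ∀ e' ∈ G.edgeSet, e' ∉ R.erase e → e' ≠ e → EdgeClose G e e' → k ≠ φ e' :=
    fun e' he' hR hne hclose heq => hkF <| heq ▸ mem_image_of_mem φ <|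
      mem_filter.2 ⟨mem_closeEdges.2 ⟨he', hne, hclose⟩, fun h => hR (mem_erase.2 ⟨hne, h⟩)⟩
  have hnotR {e'} (hR : e' ∉ R.erase e) (hne : e' ≠ e) : e' ∉ R :=
    fun h => hR (mem_erase.2 ⟨hne, h⟩)
  refine ⟨Function.update φ e k, fun e' he' hR => ?_,
    fun e₁ h₁ e₂ h₂ hR₁ hR₂ hne hclose => ?_⟩
  · rcases eq_or_ne e' e with rfl | hne
    · simpa
    · simpa [hne] using hφ.1 e' he' (hnotR hR hne)
  · rcases eq_or_ne e₁ e with rfl | hne₁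
    · simpa [Ne.symm hne] using hk e₂ h₂ hR₂ hne.symm hclose
    rcases eq_or_ne e₂ e with rfl | hne₂
    · simpa [hne₁] using (hk e₁ h₁ hR₁ hne₁ hclose.symm).symm
    simpa [hne₁, hne₂] using hφ.2 e₁ h₁ e₂ h₂ (hnotR hR₁ hne₁) (hnotR hR₂ hne₂) hne hclose

/-- Recolour the edges of `R` greedily in increasing order of `ρ`: when `e` is recoloured, the
coloured edges close to it lie outside `R` or have rank at most `ρ e`. -/
lemma stronglyLColorable_of_rank (hφ : IsStrongLColoringOutside G L R φ) (ρ : Sym2 V → ℕ)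
    (hcount : ∀ e ∈ R, #{e' ∈ closeEdges G e | e' ∉ R ∨ ρ e' ≤ ρ e} < #(L e)) :
    StronglyLColorable G L := by
  induction R using Finset.strongInduction generalizing φ with
  | H R ih =>
  rcases R.eq_empty_or_nonempty with rfl | hne
  · exact hφ.stronglyLColorable
  obtain ⟨e₀, he₀, hmin⟩ := R.exists_min_image ρ hne
  obtain ⟨ψ, hψ⟩ := hφ.exists_erase <|
    (card_le_card (monotone_filter_right _ fun _ _ => Or.inl)).trans_lt (hcount e₀ he₀)
  refine ih _ (erase_ssubset he₀) hψ fun e he => (card_le_card ?_).trans_lt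
    (hcount e (mem_of_mem_erase he))
  refine monotone_filter_right _ fun e' _ => ?_
  rintro (h | h)
  · by_cases h' : e' = e₀
    · exact Or.inr (h' ▸ hmin e (mem_of_mem_erase he))
    · exact Or.inl fun hR => h (mem_erase.2 ⟨h', hR⟩)
  · exact Or.inr h

end IsStrongLColoringOutside

lemma StronglyLColorable.exists_isStrongLColoringOutside_incidenceFinset
    {L : Sym2 V → Finset ℕ} {a : V} (h : StronglyLColorable (G.deleteIncidenceSet a) L) :
    ∃ φ, IsStrongLColoringOutside G L (G.incidenceFinset a) φ := by
  obtain ⟨φ, hφ, hL⟩ := h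
  have hdel {e} (he : e ∈ G.edgeSet) (ha : e ∉ G.incidenceFinset a) :
      e ∈ (G.deleteIncidenceSet a).edgeSet := by
    rw [edgeSet_deleteIncidenceSet]
    exact ⟨he, by simpa using ha⟩
  have hnot {e} (he : e ∈ G.edgeSet) (ha : e ∉ G.incidenceFinset a) : a ∉ e :=
    fun h => ha ((mem_incidenceFinset _ _ _).2 ⟨he, h⟩)
  exact ⟨φ, fun e he ha => hL e (hdel he ha), fun e₁ h₁ e₂ h₂ hR₁ hR₂ hne hclose =>
    hφ e₁ (hdel h₁ hR₁) e₂ (hdel h₂ hR₂) hne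
      (hclose.deleteIncidenceSet (hnot h₁ hR₁) (hnot h₂ hR₂))⟩

lemma exists_eq_mk_of_mem_incidenceFinset {a : V} {e : Sym2 V}
    (he : e ∈ G.incidenceFinset a) : ∃ x, G.Adj a x ∧ e = s(a, x) := by
  obtain ⟨hE, ha⟩ := (mem_incidenceFinset _ _ _).1 he
  induction e using Sym2.ind with
  | _ p q =>
    rcases Sym2.mem_iff.1 ha with rfl | rfl
    · exact ⟨q, hE, rfl⟩
    · exact ⟨p, hE.symm, Sym2.eq_swap⟩

lemma mk_mem_closeEdges_mk {a b x : V} (hab : G.Adj a b) (hbx : b ≠ x) :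
    s(a, b) ∈ closeEdges G s(a, x) :=
  mem_closeEdges.2
    ⟨hab, fun h => hbx (Sym2.congr_right.1 h), a, a, by simp, by simp, Or.inl rfl⟩

lemma sum_degree_eq_sum_card_filter_mem (S : Finset V) :
    ∑ z ∈ S, G.degree z = ∑ e ∈ G.edgeFinset, #{z ∈ S | z ∈ e} := by
  simp_rw [← card_incidenceFinset_eq_degree, incidenceFinset_eq_filter, card_filter]
  exact sum_comm

lemma exists_mem_neighborFinset_union_of_mem_closeEdges {a b : V} (hab : G.Adj a b)
    {e : Sym2 V} (he : e ∈ closeEdges G s(a, b)) :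
    ∃ z ∈ G.neighborFinset a ∪ G.neighborFinset b, z ∈ e := by
  obtain ⟨-, -, u, w, hu, hw, huw⟩ := mem_closeEdges.1 he
  refine ⟨w, ?_, hw⟩
  rcases Sym2.mem_iff.1 hu with rfl | rfl <;> rcases huw with rfl | huw <;>
    simp [hab.symm, *]

/-- Double counting: the edges close to `ab` all meet `S = N(a) ∪ N(b)`, and the edges of `T`
are counted twice in the degree sum over `S`. -/
lemma card_closeEdges_add_card_lt_sum_degree {a b : V} (hab : G.Adj a b) {T : Finset (Sym2 V)}
    (hTG : T ⊆ G.edgeFinset)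
    (hTS : ∀ e ∈ T, ∀ z ∈ e, z ∈ G.neighborFinset a ∪ G.neighborFinset b) :
    #(closeEdges G s(a, b)) + #T <
      ∑ z ∈ G.neighborFinset a ∪ G.neighborFinset b, G.degree z := by
  set S := G.neighborFinset a ∪ G.neighborFinset b
  set U := {e ∈ G.edgeFinset | ∃ z ∈ S, z ∈ e}
  have hTU : T ⊆ U := fun e he =>
    mem_filter.2 ⟨hTG he, _, hTS e he _ (Sym2.out_fst_mem e), Sym2.out_fst_mem e⟩
  have hU : insert s(a, b) (closeEdges G s(a, b)) ⊆ U := by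
    refine insert_subset
      (mem_filter.2 ⟨mem_edgeFinset.2 hab, a, by simp [S, hab.symm], by simp⟩) fun e he => ?_
    exact mem_filter.2
      ⟨filter_subset _ _ he, exists_mem_neighborFinset_union_of_mem_closeEdges hab he⟩
  have hT2 : ∀ e ∈ T, 2 ≤ #{z ∈ S | z ∈ e} := by
    intro e he
    induction e using Sym2.ind with
    | _ p q =>
      have hpq : p ≠ q := (G.adj_iff_exists_edge.1 (mem_edgeFinset.1 (hTG he))).1
      rw [← card_pair hpq]
      refine card_le_card fun z hz => ?_
      have hz : z ∈ s(p, q) := by simpa using hz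
      exact mem_filter.2 ⟨hTS _ he _ hz, hz⟩
  have hU1 : ∀ e ∈ U \ T, 1 ≤ #{z ∈ S | z ∈ e} := fun e he =>
    let ⟨z, hz, hze⟩ := (mem_filter.1 (mem_sdiff.1 he).1).2
    card_pos.2 ⟨z, mem_filter.2 ⟨hz, hze⟩⟩
  calc #(closeEdges G s(a, b)) + #T < #(insert s(a, b) (closeEdges G s(a, b))) + #T := by
        rw [card_insert_of_notMem (by simp [closeEdges])]
        omega
    _ ≤ #(U \ T) + 2 * #T := by
        rw [card_sdiff_of_subset hTU]
        have := card_le_card hU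
        have := card_le_card hTU
        omega
    _ ≤ ∑ e ∈ U \ T, #{z ∈ S | z ∈ e} + ∑ e ∈ T, #{z ∈ S | z ∈ e} := by
        gcongr
        · simpa using card_nsmul_le_sum _ _ 1 hU1
        · simpa [mul_comm] using card_nsmul_le_sum _ _ 2 hT2
    _ = ∑ e ∈ U, #{z ∈ S | z ∈ e} := sum_sdiff hTU
    _ ≤ ∑ e ∈ G.edgeFinset, #{z ∈ S | z ∈ e} := sum_le_sum_of_subset (filter_subset _ _)
    _ = ∑ z ∈ S, G.degree z := (sum_degree_eq_sum_card_filter_mem S).symm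

lemma card_incidenceFinset_union_add_one {a b : V} (hab : G.Adj a b) :
    #(G.incidenceFinset a ∪ G.incidenceFinset b) + 1 = G.degree a + G.degree b := by
  have hinter : G.incidenceFinset a ∩ G.incidenceFinset b = {s(a, b)} := by
    rw [← coe_inj]
    simpa using G.incidenceSet_inter_incidenceSet_of_adj hab
  rw [← card_incidenceFinset_eq_degree, ← card_incidenceFinset_eq_degree,
    ← card_union_add_card_inter, hinter, card_singleton]

lemma mem_neighborFinset_union_of_mem_incidenceFinset_union {a b z : V} (hab : G.Adj a b)
    {e : Sym2 V} (he : e ∈ G.incidenceFinset a ∪ G.incidenceFinset b) (hz : z ∈ e) :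
    z ∈ G.neighborFinset a ∪ G.neighborFinset b := by
  rcases mem_union.1 he with he | he <;>
    rcases eq_or_adj_of_mem_incidenceSet ((mem_incidenceFinset _ _ _).1 he) hz with rfl | h <;>
    simp [hab.symm, *]

lemma incidenceFinset_union_subset_edgeFinset (a b : V) :
    G.incidenceFinset a ∪ G.incidenceFinset b ⊆ G.edgeFinset :=
  union_subset (incidenceFinset_subset G a) (incidenceFinset_subset G b)

variable (hΔ : ∀ z, G.degree z ≤ 4) {a b c : V} (hab : G.Adj a b) (hac : G.Adj a c)
  (hbc : G.Adj b c)
include hΔ hab hac hbc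

lemma card_closeEdges_le_of_triangle : #(closeEdges G s(a, b)) ≤ 20 := by
  have hclose := card_closeEdges_add_card_lt_sum_degree hab
    (incidenceFinset_union_subset_edgeFinset a b)
    fun e he z hz => mem_neighborFinset_union_of_mem_incidenceFinset_union hab he hz
  have hT := card_incidenceFinset_union_add_one hab
  have hsum := sum_le_card_nsmul (G.neighborFinset a ∪ G.neighborFinset b) (G.degree ·) 4
    fun z _ => hΔ z
  have hS : #(G.neighborFinset a ∪ G.neighborFinset b) + 1 ≤ G.degree a + G.degree b := by
    have hc : c ∈ G.neighborFinset a ∩ G.neighborFinset b := by simp [hac, hbc]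
    have := card_union_add_card_inter (G.neighborFinset a) (G.neighborFinset b)
    rw [card_neighborFinset_eq_degree, card_neighborFinset_eq_degree] at this
    have := card_pos.2 ⟨c, hc⟩
    omega
  have := hΔ a
  have := hΔ b
  simp only [smul_eq_mul] at hsum
  omega

lemma card_closeEdges_le_of_adj_triangle {x : V} (hax : G.Adj a x) (hxb : x ≠ b)
    (hxc : x ≠ c) : #(closeEdges G s(a, x)) ≤ 23 := by
  have hbc' : s(b, c) ∉ G.incidenceFinset a ∪ G.incidenceFinset x := by
    simp only [mem_union, mem_incidenceFinset, mk'_mem_incidenceSet_iff]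
    rintro (⟨-, h | h⟩ | ⟨-, h | h⟩)
    exacts [hab.ne h, hac.ne h, hxb h, hxc h]
  have hclose := card_closeEdges_add_card_lt_sum_degree hax
    (T := insert s(b, c) (G.incidenceFinset a ∪ G.incidenceFinset x))
    (insert_subset (mem_edgeFinset.2 hbc) (incidenceFinset_union_subset_edgeFinset a x))
    fun e he z hz => by
      rcases mem_insert.1 he with rfl | he
      · rcases Sym2.mem_iff.1 hz with rfl | rfl <;> simp [hab, hac]
      · exact mem_neighborFinset_union_of_mem_incidenceFinset_union hax he hz
  have hT := card_incidenceFinset_union_add_one hax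
  rw [card_insert_of_notMem hbc'] at hclose
  have hsum := sum_le_card_nsmul (G.neighborFinset a ∪ G.neighborFinset x) (G.degree ·) 4
    fun z _ => hΔ z
  have hS := card_union_le (G.neighborFinset a) (G.neighborFinset x)
  rw [card_neighborFinset_eq_degree, card_neighborFinset_eq_degree] at hS
  have := hΔ a
  have := hΔ x
  simp only [smul_eq_mul] at hsum
  omega

lemma card_filter_closeEdges_le_of_triangle (ρ : Sym2 V → ℕ)
    (hρ : ∀ x, G.Adj a x → x ≠ b → x ≠ c → ρ s(a, x) < ρ s(a, b) ∧ ρ s(a, x) < ρ s(a, c))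
    {e : Sym2 V} (he : e ∈ G.incidenceFinset a) :
    #{e' ∈ closeEdges G e | e' ∉ G.incidenceFinset a ∨ ρ e' ≤ ρ e} ≤ 21 := by
  obtain ⟨x, hax, rfl⟩ := exists_eq_mk_of_mem_incidenceFinset he
  by_cases hxb : x = b
  · subst hxb
    exact (card_filter_le _ _).trans
      ((card_closeEdges_le_of_triangle hΔ hax hac hbc).trans (by norm_num))
  by_cases hxc : x = c
  · subst hxc
    exact (card_filter_le _ _).trans
      ((card_closeEdges_le_of_triangle hΔ hax hab hbc.symm).trans (by norm_num))
  have hpair : {s(a, b), s(a, c)} ⊆ closeEdges G s(a, x) :=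
    insert_subset (mk_mem_closeEdges_mk hab (Ne.symm hxb))
      (singleton_subset_iff.2 (mk_mem_closeEdges_mk hac (Ne.symm hxc)))
  have hsub : {e' ∈ closeEdges G s(a, x) | e' ∉ G.incidenceFinset a ∨ ρ e' ≤ ρ s(a, x)} ⊆
      closeEdges G s(a, x) \ {s(a, b), s(a, c)} := by
    refine fun e' he' => mem_sdiff.2 ⟨(mem_filter.1 he').1, fun h => ?_⟩
    have hinc {y} (hay : G.Adj a y) : s(a, y) ∈ G.incidenceFinset a :=
      (mem_incidenceFinset _ _ _).2 ((G.mem_incidenceSet a y).2 hay)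
    obtain ⟨hρb, hρc⟩ := hρ x hax hxb hxc
    rcases mem_insert.1 h with rfl | h
    · rcases (mem_filter.1 he').2 with h | h
      exacts [h (hinc hab), by omega]
    · rcases (mem_filter.1 he').2 with h' | h' <;> rw [mem_singleton.1 h] at h'
      exacts [h' (hinc hac), by omega]
  have := card_le_card hsub
  rw [card_sdiff_of_subset hpair, card_pair fun h => hbc.ne (Sym2.congr_right.1 h)] at this
  have := card_closeEdges_le_of_adj_triangle hΔ hab hac hbc hax hxb hxc
  omega

end

theorem minimal_counterexample_no_cycle_general
    {V : Type*} [Fintype V] (G : SimpleGraph V) [DecidableRel G.Adj]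
    (hΔ : ∀ u, G.degree u ≤ 4)
    (L : Sym2 V → Finset ℕ) (hL : ∀ e ∈ G.edgeSet, 22 ≤ (L e).card)
    (hG : ¬ StronglyLColorable G L)
    (hmin : ∀ H : SimpleGraph V, H < G → StronglyLColorable H L) :
    ¬ ∃ (v : V) (p : G.Walk v v), p.IsCycle ∧ p.length = 3 := by
  classical
  intro hcycle
  obtain ⟨s, hs⟩ := is3Clique_iff_exists_cycle_length_three.2 hcycle
  obtain ⟨a, b, c, hab, hac, hbc, -⟩ := is3Clique_iff.1 hs
  obtain ⟨φ, hφ⟩ :=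
    (hmin _ (deleteIncidenceSet_lt hab)).exists_isStrongLColoringOutside_incidenceFinset
  let ρ : Sym2 V → ℕ := fun e => if e = s(a, b) ∨ e = s(a, c) then 1 else 0
  refine hG (hφ.stronglyLColorable_of_rank ρ fun e he => ?_)
  refine (card_filter_closeEdges_le_of_triangle hΔ hab hac hbc ρ
    (fun x _ hxb hxc => ?_) he).trans_lt ?_
  · simp [ρ, hxb, hxc, hab.ne, hac.ne]
  · exact (by norm_num : 21 < 22).trans_le (hL e ((mem_incidenceFinset _ _ _).1 he).1)

/-- A minimal counterexample (for lists of size 22) among connected simple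
graphs with maximum degree at most 4 has no cycle of length 3. -/
theorem minimal_counterexample_no_cycle
    {V : Type*} [Fintype V] (G : SimpleGraph V) [DecidableRel G.Adj]
    (hconn : G.Connected) (hΔ : ∀ u, G.degree u ≤ 4)
    (L : Sym2 V → Finset ℕ) (hL : ∀ e ∈ G.edgeSet, 22 ≤ (L e).card)
    (hG : ¬ StronglyLColorable G L)
    (hmin : ∀ H : SimpleGraph V, H < G → StronglyLColorable H L) :
    ¬ ∃ (v : V) (p : G.Walk v v), p.IsCycle ∧ p.length = 3 :=
  minimal_counterexample_no_cycle_general G hΔ L hL hG hmin
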